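/- arXiv:2206.07016 — 10 statements merged into one kernel-verified Lean document; each statement's English description precedes it below -/
import Mathlib

section
/- Let β = max{β_ls, β_cs} and σ = min{α_as, α_ls, α_cs}, and set ε = ρN / (α_sa/σ + 1 + βρN/σ). Then for any solution of the colony migration system in Ω, liminf_{t→∞} S(t) ≥ ε, i.e., the searching population S is uniformly persistent with lower bound ε. -/
/-!
Since `S + A + L + C = ρN`, the return flux satisfies `α_as A + α_ls L + α_cs C ≥ σ(ρN - S)` and
the recruitment loss satisfies `β_ls S L + β_cs S C ≤ βρN S`, so `S' ≥ k(ε - S)` with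
`k = α_sa + σ + βρN` and `ε = σρN / k`. Grönwall's inequality applied to `ε - S` then gives
`S t ≥ ε + (S 0 - ε) e^{-kt}`, whose limit is `ε`.
-/

open Filter Set Real

theorem add_mul_exp_le_of_hasDerivAt_ge {f f' : ℝ → ℝ} {a k m : ℝ}
    (hf : ∀ t ≥ a, HasDerivAt f (f' t) t) (hf' : ∀ t ≥ a, k * (m - f t) ≤ f' t) :
    ∀ t ≥ a, m + (f a - m) * exp (-k * (t - a)) ≤ f t := by
  intro t ht
  have hgap : ∀ x ∈ Icc a t, m - f x ≤ gronwallBound (m - f a) (-k) 0 (x - a) := by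
    refine le_gronwallBound_of_liminf_deriv_right_le (f' := fun x => -f' x) ?_ ?_ le_rfl ?_
    · exact fun x hx => ((hf x hx.1).continuousAt.continuousWithinAt).const_sub m
    · exact fun x hx r hr => (((hf x hx.1).const_sub m).hasDerivWithinAt).liminf_right_slope_le hr
    · intro x hx
      linarith [hf' x hx.1]
  have := hgap t ⟨ht, le_rfl⟩
  rw [gronwallBound_ε0] at this
  linarith

theorem le_liminf_of_hasDerivAt_ge {f f' : ℝ → ℝ} {a k m : ℝ} (hk : 0 < k)
    (hf : ∀ t ≥ a, HasDerivAt f (f' t) t) (hf' : ∀ t ≥ a, k * (m - f t) ≤ f' t)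
    (hcob : IsCoboundedUnder (· ≥ ·) atTop f) :
    m ≤ liminf f atTop := by
  set lower : ℝ → ℝ := fun t => m + (f a - m) * exp (-k * (t - a))
  have hlower : Tendsto lower atTop (nhds m) := by
    have hshift : Tendsto (fun t => t - a) atTop atTop := by
      simpa only [sub_eq_add_neg, id] using tendsto_atTop_add_const_right _ (-a) tendsto_id
    have hexp : Tendsto (fun t => exp (-k * (t - a))) atTop (nhds 0) :=
      tendsto_exp_atBot.comp (hshift.const_mul_atTop_of_neg (neg_lt_zero.mpr hk))
    have := (hexp.const_mul (f a - m)).const_add m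
    rwa [mul_zero, add_zero] at this
  calc m = liminf lower atTop := hlower.liminf_eq.symm
    _ ≤ liminf f atTop :=
      liminf_le_liminf (eventually_atTop.mpr ⟨a, add_mul_exp_le_of_hasDerivAt_ge hf hf'⟩)
        hlower.isBoundedUnder_ge hcob

theorem sub_mul_le_searching_rate {asa aas als acs bls bcs σ β P s x l c : ℝ}
    (hσa : σ ≤ aas) (hσl : σ ≤ als) (hσc : σ ≤ acs) (hbl : bls ≤ β) (hbc : bcs ≤ β)
    (hβ : 0 ≤ β) (hs : 0 ≤ s) (hx : 0 ≤ x) (hl : 0 ≤ l) (hc : 0 ≤ c) (hP : s + x + l + c = P) :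
    σ * P - (asa + σ + β * P) * s ≤
      -asa * s - bls * s * l - bcs * s * c + aas * x + als * l + acs * c := by
  have hL : bls * s * l ≤ β * s * l := by gcongr
  have hC : bcs * s * c ≤ β * s * c := by gcongr
  have hLC : β * s * (l + c) ≤ β * s * P := by gcongr; linarith
  have hX : σ * x ≤ aas * x := by gcongr
  have hl' : σ * l ≤ als * l := by gcongr
  have hc' : σ * c ≤ acs * c := by gcongr
  subst hP
  linarith

theorem stmt2_persistence_S_general
    (asa aas als acs bls bcs ρ N : ℝ)
    (hasa : 0 < asa) (haas : 0 < aas)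
    (hals : 0 < als) (hacs : 0 < acs) (hbls : 0 < bls)
    (hρ : 0 < ρ) (hN : 0 < N)
    (S A L C : ℝ → ℝ)
    (hS : ∀ t, HasDerivAt S
      (-asa * S t - bls * S t * L t - bcs * S t * C t + aas * A t + als * L t + acs * C t) t)
    (hΩ : ∀ t ≥ (0 : ℝ), 0 ≤ S t ∧ 0 ≤ A t ∧ 0 ≤ L t ∧ 0 ≤ C t ∧
      S t + A t + L t + C t = ρ * N) :
    (ρ * N / (asa / min (min aas als) acs + 1 +
        max bls bcs * ρ * N / min (min aas als) acs)) ≤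
      liminf (fun t => S t) atTop := by
  set σ := min (min aas als) acs
  set β := max bls bcs
  have hσ : 0 < σ := lt_min (lt_min haas hals) hacs
  have hβ : 0 ≤ β := le_max_of_le_left hbls.le
  have hk : 0 < asa + σ + β * (ρ * N) := by positivity
  have hε : ρ * N / (asa / σ + 1 + β * ρ * N / σ) = σ * (ρ * N) / (asa + σ + β * (ρ * N)) := by
    field_simp
  rw [hε]
  refine le_liminf_of_hasDerivAt_ge hk (a := 0) (fun t _ => hS t) (fun t ht => ?_) ?_
  · obtain ⟨hS0, hA0, hL0, hC0, hsum⟩ := hΩ t ht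
    rw [mul_sub, mul_div_cancel₀ _ hk.ne']
    exact sub_mul_le_searching_rate (min_le_left _ _ |>.trans (min_le_left _ _))
      (min_le_left _ _ |>.trans (min_le_right _ _)) (min_le_right _ _) (le_max_left _ _)
      (le_max_right _ _) hβ hS0 hA0 hL0 hC0 hsum
  · refine (isBoundedUnder_of_eventually_le (a := ρ * N) ?_).isCoboundedUnder_ge
    filter_upwards [eventually_ge_atTop 0] with t ht
    obtain ⟨-, hA0, hL0, hC0, hsum⟩ := hΩ t ht
    linarith

/-- uniform persistence of the searching population S with lower
bound ε = ρN / (α_sa/σ + 1 + βρN/σ), where β = max{β_ls,β_cs},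
σ = min{α_as,α_ls,α_cs}, for solutions in Ω. -/
theorem stmt2_persistence_S
    (asa aas aal alc als acs bls bcs ρ N Q₁ : ℝ)
    (hasa : 0 < asa) (haas : 0 < aas) (haal : 0 < aal) (halc : 0 < alc)
    (hals : 0 < als) (hacs : 0 < acs) (hbls : 0 < bls) (hbcs : 0 < bcs)
    (hρ : 0 < ρ) (hρ1 : ρ < 1) (hN : 0 < N) (hQ : Q₁ = 0 ∨ Q₁ = 1)
    (S A L C : ℝ → ℝ)
    (hS : ∀ t, HasDerivAt S
      (-asa * S t - bls * S t * L t - bcs * S t * C t + aas * A t + als * L t + acs * C t) t)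
    (hA : ∀ t, HasDerivAt A
      (asa * S t + bls * S t * L t + bcs * S t * C t - (aas + aal) * A t) t)
    (hL : ∀ t, HasDerivAt L (aal * A t - alc * Q₁ * L t - als * L t) t)
    (hC : ∀ t, HasDerivAt C (alc * Q₁ * L t - acs * C t) t)
    (hΩ : ∀ t ≥ (0 : ℝ), 0 ≤ S t ∧ 0 ≤ A t ∧ 0 ≤ L t ∧ 0 ≤ C t ∧
      S t + A t + L t + C t = ρ * N) :
    (ρ * N / (asa / min (min aas als) acs + 1 +
        max bls bcs * ρ * N / min (min aas als) acs)) ≤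
      liminf (fun t => S t) atTop :=
  stmt2_persistence_S_general asa aas als acs bls bcs ρ N hasa haas hals hacs hbls hρ hN S A L C hS
    hΩ
end

section
/- If liminf_{t→∞} S(t) ≥ ε > 0 for a solution of the colony migration subsystem (Q₁ = 0 or 1), then liminf_{t→∞} A(t) ≥ α_sa ε / (α_as + α_al) and, with ε_A denoting this bound, liminf_{t→∞} L(t) ≥ α_al ε_A / (α_lc + α_ls). -/
/-!
Along a solution in Γ, A' ≥ α_sa S - (α_as + α_al) A and L' ≥ α_al A - (α_lc + α_ls) L, since the
dropped terms (β_ls L + β_cs C) S and α_lc (1 - Q₁) L are nonnegative. Whenever the forcing term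
eventually exceeds c, such an inequality f' ≥ a c - b f makes (f - a c / b) e^{bt} eventually
monotone, hence liminf f ≥ a c / b. Letting c increase to liminf S bounds A, and A then serves as
the forcing term for L.
-/

open Filter Set Real

theorem monotoneOn_mul_exp_of_hasDerivAt {h h' : ℝ → ℝ} {b t₀ : ℝ}
    (hh : ∀ t, HasDerivAt h (h' t) t) (hpos : ∀ t ≥ t₀, 0 ≤ h' t + b * h t) :
    MonotoneOn (fun t => h t * exp (b * t)) (Ici t₀) := by
  have hderiv : ∀ t, HasDerivAt (fun t => h t * exp (b * t))
      ((h' t + b * h t) * exp (b * t)) t := fun t => by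
    have hexp : HasDerivAt (fun t => exp (b * t)) (exp (b * t) * b) t := by
      simpa using ((hasDerivAt_id t).const_mul b).exp
    exact ((hh t).fun_mul hexp).congr_deriv (by ring)
  refine monotoneOn_of_hasDerivWithinAt_nonneg (convex_Ici t₀)
    (fun t _ => (hderiv t).continuousAt.continuousWithinAt)
    (fun t _ => (hderiv t).hasDerivWithinAt) fun t ht => ?_
  rw [interior_Ici] at ht
  exact mul_nonneg (hpos t (le_of_lt ht)) (exp_pos _).le

theorem le_liminf_of_hasDerivAt_of_sub_mul_le {f g : ℝ → ℝ} {b k : ℝ} (hb : 0 < b)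
    (hf : ∀ t, HasDerivAt f (g t) t) (hbdd : IsBoundedUnder (· ≤ ·) atTop f)
    (hg : ∀ᶠ t in atTop, k - b * f t ≤ g t) :
    k / b ≤ liminf f atTop := by
  obtain ⟨t₀, ht₀⟩ := hg.exists_forall_of_atTop
  set c := (f t₀ - k / b) * exp (b * t₀)
  have hkb : b * (k / b) = k := mul_div_cancel₀ k hb.ne'
  have hmono := monotoneOn_mul_exp_of_hasDerivAt (h := fun t => f t - k / b) (b := b)
    (fun t => (hf t).sub_const _) fun t ht => by rw [mul_sub, hkb]; linarith [ht₀ t ht]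
  have hlower : ∀ t ≥ t₀, k / b + c * exp (-(b * t)) ≤ f t := fun t ht => by
    have hc : c ≤ (f t - k / b) * exp (b * t) := hmono self_mem_Ici ht ht
    rw [exp_neg, ← div_eq_mul_inv, ← le_sub_iff_add_le', div_le_iff₀ (exp_pos _)]
    exact hc
  have htend : Tendsto (fun t => k / b + c * exp (-(b * t))) atTop (nhds (k / b)) := by
    have hexp := tendsto_exp_neg_atTop_nhds_zero.comp (tendsto_id.const_mul_atTop hb)
    simpa using tendsto_const_nhds.add (hexp.const_mul c)
  calc k / b = liminf (fun t => k / b + c * exp (-(b * t))) atTop := htend.liminf_eq.symm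
    _ ≤ liminf f atTop :=
      liminf_le_liminf (eventually_atTop.2 ⟨t₀, hlower⟩) htend.isBoundedUnder_ge
        hbdd.isCoboundedUnder_ge

theorem le_liminf_of_hasDerivAt_of_le_liminf {f g u : ℝ → ℝ} {a b ε : ℝ} (ha : 0 < a)
    (hb : 0 < b) (hf : ∀ t, HasDerivAt f (g t) t) (hfbdd : IsBoundedUnder (· ≤ ·) atTop f)
    (hubdd : IsBoundedUnder (· ≥ ·) atTop u) (hg : ∀ᶠ t in atTop, a * u t - b * f t ≤ g t)
    (hε : ε ≤ liminf u atTop) :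
    a * ε / b ≤ liminf f atTop := by
  refine le_of_forall_lt_imp_le_of_dense fun c hc => ?_
  have hcε : c * b / a < ε := by rwa [div_lt_iff₀ ha, mul_comm ε, ← lt_div_iff₀ hb]
  have hu : ∀ᶠ t in atTop, c * b / a < u t := eventually_lt_of_lt_liminf (hcε.trans_le hε) hubdd
  have hk : a * (c * b / a) / b = c := by field_simp
  rw [← hk]
  refine le_liminf_of_hasDerivAt_of_sub_mul_le hb hf hfbdd ?_
  filter_upwards [hg, hu] with t hgt hut
  linarith [mul_lt_mul_of_pos_left hut ha]

theorem stmt3_persistence_A_L_general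
    (asa aas aal alc als bls bcs ρ N Q₁ ε : ℝ)
    (hasa : 0 < asa) (haas : 0 < aas) (haal : 0 < aal) (halc : 0 < alc)
    (hals : 0 < als) (hbls : 0 < bls) (hbcs : 0 < bcs)
    (hQ : Q₁ = 0 ∨ Q₁ = 1)
    (A L C : ℝ → ℝ)
    (hA : ∀ t, HasDerivAt A
      ((asa + bls * L t + bcs * C t) * (ρ * N - A t - L t - C t) - (aas + aal) * A t) t)
    (hL : ∀ t, HasDerivAt L (aal * A t - (alc * Q₁ + als) * L t) t)
    (hΓ : ∀ t ≥ (0 : ℝ), 0 ≤ A t ∧ 0 ≤ L t ∧ 0 ≤ C t ∧ A t + L t + C t ≤ ρ * N)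
    (hSliminf : ε ≤ liminf (fun t => ρ * N - A t - L t - C t) atTop) :
    (asa * ε / (aas + aal)) ≤ liminf (fun t => A t) atTop ∧
      (aal * (asa * ε / (aas + aal)) / (alc + als)) ≤ liminf (fun t => L t) atTop := by
  have hΓ' : ∀ᶠ t in atTop, 0 ≤ A t ∧ 0 ≤ L t ∧ 0 ≤ C t ∧ A t + L t + C t ≤ ρ * N :=
    eventually_atTop.2 ⟨0, hΓ⟩
  have hQ_le : alc * Q₁ ≤ alc := by rcases hQ with rfl | rfl <;> linarith
  have hA_bdd : IsBoundedUnder (· ≤ ·) atTop A :=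
    isBoundedUnder_of_eventually_le (a := ρ * N) (hΓ'.mono fun t ht => by linarith)
  have hL_bdd : IsBoundedUnder (· ≤ ·) atTop L :=
    isBoundedUnder_of_eventually_le (a := ρ * N) (hΓ'.mono fun t ht => by linarith)
  have hS_bdd : IsBoundedUnder (· ≥ ·) atTop fun t => ρ * N - A t - L t - C t :=
    isBoundedUnder_of_eventually_ge (a := 0) (hΓ'.mono fun t ht => by linarith)
  have hA_liminf : asa * ε / (aas + aal) ≤ liminf A atTop := by
    refine le_liminf_of_hasDerivAt_of_le_liminf hasa (by positivity) hA hA_bdd hS_bdd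
      (hΓ'.mono fun t ⟨_, hL0, hC0, hsum⟩ => ?_) hSliminf
    linarith [mul_nonneg (add_nonneg (mul_nonneg hbls.le hL0) (mul_nonneg hbcs.le hC0))
      (sub_nonneg.2 hsum)]
  refine ⟨hA_liminf, le_liminf_of_hasDerivAt_of_le_liminf haal (by positivity) hL hL_bdd
    (isBoundedUnder_of_eventually_ge (hΓ'.mono fun t ht => ht.1))
    (hΓ'.mono fun t ⟨_, hL0, _, _⟩ => ?_) hA_liminf⟩
  linarith [mul_le_mul_of_nonneg_right hQ_le hL0]

/-- persistence of S yields persistence of A and L. -/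
theorem stmt3_persistence_A_L
    (asa aas aal alc als acs bls bcs ρ N Q₁ ε : ℝ)
    (hasa : 0 < asa) (haas : 0 < aas) (haal : 0 < aal) (halc : 0 < alc)
    (hals : 0 < als) (hacs : 0 < acs) (hbls : 0 < bls) (hbcs : 0 < bcs)
    (hρ : 0 < ρ) (hρ1 : ρ < 1) (hN : 0 < N) (hQ : Q₁ = 0 ∨ Q₁ = 1)
    (hε : 0 < ε)
    (A L C : ℝ → ℝ)
    (hA : ∀ t, HasDerivAt A
      ((asa + bls * L t + bcs * C t) * (ρ * N - A t - L t - C t) - (aas + aal) * A t) t)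
    (hL : ∀ t, HasDerivAt L (aal * A t - (alc * Q₁ + als) * L t) t)
    (hC : ∀ t, HasDerivAt C (alc * Q₁ * L t - acs * C t) t)
    (hΓ : ∀ t ≥ (0 : ℝ), 0 ≤ A t ∧ 0 ≤ L t ∧ 0 ≤ C t ∧ A t + L t + C t ≤ ρ * N)
    (hSliminf : ε ≤ liminf (fun t => ρ * N - A t - L t - C t) atTop) :
    (asa * ε / (aas + aal)) ≤ liminf (fun t => A t) atTop ∧
      (aal * (asa * ε / (aas + aal)) / (alc + als)) ≤ liminf (fun t => L t) atTop :=
  stmt3_persistence_A_L_general asa aas aal alc als bls bcs ρ N Q₁ ε hasa haas haal halc hals hbls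
    hbcs hQ A L C hA hL hΓ hSliminf
end

section
/- Define ξ₁ = (α_al β_ls / (α_ls(α_as+α_al))) / ((α_sa/(α_as+α_al))(1 + α_al/α_ls)) and η₁ = 1/((α_sa/(α_as+α_al))(1 + α_al/α_ls)). Then L^f = [(ρN ξ₁ - 1 - η₁) + √((ρN ξ₁ - 1 - η₁)² + 4ξ₁ρN)] / (2ξ₁(1 + α_ls/α_al)) is a positive real number, and with A^f = (α_ls/α_al)L^f, the point (A^f, L^f, 0) is an equilibrium of subsystem S₁ (the system with Q₁=0). -/
/-!
Writing `M = A + L` for the total of the first two compartments, the second equation forces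
`A : L = α_ls : α_al`, and after dividing by `α_sa` the first becomes `(1 + ξ₁ M)(ρN - M) = η₁ M`,
i.e. `ξ₁ M² = (ρN ξ₁ - 1 - η₁) M + ρN`. Since `ξ₁ > 0` and `ρN > 0`, this quadratic has exactly one
positive root, given by the quadratic formula with the `+` sign, and `L^f = α_al M / (α_al + α_ls)`.
-/

/-- The larger root of `a x² = b x + c` when `a > 0`. -/
noncomputable def quadraticRoot (a b c : ℝ) : ℝ := (b + √(b ^ 2 + 4 * a * c)) / (2 * a)

section

variable {a b c : ℝ}

theorem quadraticRoot_pos (ha : 0 < a) (hc : 0 < c) : 0 < quadraticRoot a b c := by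
  have hb : |b| < √(b ^ 2 + 4 * a * c) :=
    (Real.lt_sqrt (abs_nonneg b)).2 (by nlinarith [sq_abs b, mul_pos ha hc])
  exact div_pos (by linarith [neg_abs_le b]) (by positivity)

theorem quadraticRoot_eq (ha : a ≠ 0) (hd : 0 ≤ b ^ 2 + 4 * a * c) :
    a * quadraticRoot a b c ^ 2 = b * quadraticRoot a b c + c := by
  have hs := Real.sq_sqrt hd
  unfold quadraticRoot
  set s := √(b ^ 2 + 4 * a * c)
  field_simp
  linear_combination hs

end

theorem stmt4_Ef_equilibrium_general
    (asa aas aal als acs bls bcs ρ N : ℝ)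
    (hasa : 0 < asa) (haas : 0 < aas) (haal : 0 < aal)
    (hals : 0 < als) (hbls : 0 < bls)
    (hρ : 0 < ρ) (hN : 0 < N) :
    let η₁ := 1 / ((asa / (aas + aal)) * (1 + aal / als))
    let ξ₁ := (aal * bls / (als * (aas + aal))) / ((asa / (aas + aal)) * (1 + aal / als))
    let Lf := ((ρ * N * ξ₁ - 1 - η₁) +
        Real.sqrt ((ρ * N * ξ₁ - 1 - η₁) ^ 2 + 4 * ξ₁ * ρ * N)) /
      (2 * ξ₁ * (1 + als / aal))
    let Af := (als / aal) * Lf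
    0 < Lf ∧
    (asa + bls * Lf + bcs * 0) * (ρ * N - Af - Lf - 0) - (aas + aal) * Af = 0 ∧
    aal * Af - als * Lf = 0 ∧
    -acs * (0 : ℝ) = 0 := by
  intro η₁ ξ₁ Lf Af
  have hξ : ξ₁ = aal * bls / (asa * (als + aal)) := by
    simp only [ξ₁]; field_simp
  have hη : η₁ = (aas + aal) * als / (asa * (als + aal)) := by
    simp only [η₁]; field_simp
  have hξ_pos : 0 < ξ₁ := by rw [hξ]; positivity
  have hρN : 0 < ρ * N := mul_pos hρ hN
  set b := ρ * N * ξ₁ - 1 - η₁ with hb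
  set M := quadraticRoot ξ₁ b (ρ * N)
  have hLf : Lf = aal * M / (als + aal) := by
    simp only [Lf, M, quadraticRoot, mul_assoc]; field_simp; ring
  have hAf : Af = als * M / (als + aal) := by
    simp only [Af, hLf]; field_simp
  have hM_pos : 0 < M := quadraticRoot_pos hξ_pos hρN
  have hM_root : ξ₁ * M ^ 2 = b * M + ρ * N :=
    quadraticRoot_eq hξ_pos.ne' (by nlinarith [sq_nonneg b, mul_pos hξ_pos hρN])
  clear_value Af Lf M b ξ₁ η₁
  subst hξ hη hLf hAf hb
  refine ⟨by positivity, ?_, by field_simp; ring, by ring⟩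
  field_simp at hM_root ⊢
  linear_combination (-(als + aal)) * hM_root

/-- L^f is positive and (A^f, L^f, 0) is an equilibrium of
subsystem S₁ (Q₁ = 0). -/
theorem stmt4_Ef_equilibrium
    (asa aas aal als acs bls bcs ρ N : ℝ)
    (hasa : 0 < asa) (haas : 0 < aas) (haal : 0 < aal)
    (hals : 0 < als) (hacs : 0 < acs) (hbls : 0 < bls) (hbcs : 0 < bcs)
    (hρ : 0 < ρ) (hρ1 : ρ < 1) (hN : 0 < N) :
    let η₁ := 1 / ((asa / (aas + aal)) * (1 + aal / als))
    let ξ₁ := (aal * bls / (als * (aas + aal))) / ((asa / (aas + aal)) * (1 + aal / als))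
    let Lf := ((ρ * N * ξ₁ - 1 - η₁) +
        Real.sqrt ((ρ * N * ξ₁ - 1 - η₁) ^ 2 + 4 * ξ₁ * ρ * N)) /
      (2 * ξ₁ * (1 + als / aal))
    let Af := (als / aal) * Lf
    0 < Lf ∧
    (asa + bls * Lf + bcs * 0) * (ρ * N - Af - Lf - 0) - (aas + aal) * Af = 0 ∧
    aal * Af - als * Lf = 0 ∧
    -acs * (0 : ℝ) = 0 :=
  stmt4_Ef_equilibrium_general asa aas aal als acs bls bcs ρ N hasa haas haal hals hbls hρ hN
end

section
/- Subsystem S₁ (the system with Q₁ = 0) has a unique equilibrium in the region Γ = {(A,L,C) : A,L,C ≥ 0, A+L+C ≤ ρN}, namely E^f = (A^f, L^f, 0) with the explicit formulas given. -/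
/-!
Since `dC/dt = -α_cs C`, every equilibrium has `C = 0`, and `dL/dt = 0` forces
`A = (α_ls/α_al) L`. Along this line the `A`-equation, written in the total population
`x = A + L`, becomes the quadratic `ξ₁ x² - (ρN ξ₁ - 1 - η₁) x - ρN = 0`; its leading
coefficient is positive and its constant term negative, so it has exactly one nonnegative
root, namely `(1 + α_ls/α_al) L^f`. The equilibrium lies in `Γ` because the `A`-equation makes
`(α_sa + β_ls L)(ρN - A - L)` equal to the nonnegative `(α_as + α_al) A`.
-/

open Real

noncomputable def quadPosRoot (p m c : ℝ) : ℝ := (m + √(m ^ 2 + 4 * p * c)) / (2 * p)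

section QuadPosRoot

variable {p c : ℝ} (m : ℝ)

theorem lt_sqrt_discrim (hp : 0 < p) (hc : 0 < c) : |m| < √(m ^ 2 + 4 * p * c) := by
  rw [← sqrt_sq_eq_abs]
  exact sqrt_lt_sqrt (sq_nonneg m) (by linarith [mul_pos hp hc])

theorem quadPosRoot_pos (hp : 0 < p) (hc : 0 < c) : 0 < quadPosRoot p m c :=
  div_pos (by linarith [neg_abs_le m, lt_sqrt_discrim m hp hc]) (by positivity)

/-- The other root `(m - √(m² + 4pc)) / (2p)` is negative. -/
theorem eq_quadPosRoot_iff {x : ℝ} (hp : 0 < p) (hc : 0 < c) (hx : 0 ≤ x) :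
    p * x ^ 2 - m * x - c = 0 ↔ x = quadPosRoot p m c := by
  have hdisc : discrim p (-m) (-c) = √(m ^ 2 + 4 * p * c) * √(m ^ 2 + 4 * p * c) := by
    rw [mul_self_sqrt (by nlinarith [sq_nonneg m]), discrim]; ring
  have hquad := quadratic_eq_zero_iff hp.ne' hdisc x
  rw [neg_neg] at hquad
  rw [show p * x ^ 2 - m * x - c = p * (x * x) + -m * x + -c by ring, hquad, quadPosRoot]
  refine or_iff_left fun hneg => ?_
  have : (m - √(m ^ 2 + 4 * p * c)) / (2 * p) < 0 :=
    div_neg_of_neg_of_pos (by linarith [le_abs_self m, lt_sqrt_discrim m hp hc]) (by positivity)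
  linarith

end QuadPosRoot

namespace S1

variable (asa aas aal als bls ρ N : ℝ)

noncomputable def η₁ : ℝ := 1 / ((asa / (aas + aal)) * (1 + aal / als))

noncomputable def ξ₁ : ℝ :=
  (aal * bls / (als * (aas + aal))) / ((asa / (aas + aal)) * (1 + aal / als))

noncomputable def μ₁ : ℝ := ρ * N * ξ₁ asa aas aal als bls - 1 - η₁ asa aas aal als

variable {asa aas aal als bls}

theorem ξ₁_pos (hasa : 0 < asa) (haas : 0 < aas) (haal : 0 < aal) (hals : 0 < als)
    (hbls : 0 < bls) : 0 < ξ₁ asa aas aal als bls := by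
  unfold ξ₁; positivity

theorem rateA_eq_quadratic (bcs L : ℝ) (hasa : 0 < asa) (haas : 0 < aas) (haal : 0 < aal)
    (hals : 0 < als) :
    (asa + bls * L + bcs * 0) * (ρ * N - als / aal * L - L - 0) - (aas + aal) * (als / aal * L) =
      -asa * (ξ₁ asa aas aal als bls * ((1 + als / aal) * L) ^ 2
        - μ₁ asa aas aal als bls ρ N * ((1 + als / aal) * L) - ρ * N) := by
  have : 0 < aas + aal := by linarith
  unfold μ₁ ξ₁ η₁
  field_simp
  ring

theorem add_le_of_rateA_eq_zero {r d A L C K : ℝ} (hr : 0 < r) (hd : 0 ≤ d) (hA : 0 ≤ A)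
    (h : r * (K - A - L - C) - d * A = 0) : A + L + C ≤ K := by
  by_contra! hlt
  nlinarith [mul_nonneg hd hA]

end S1

theorem stmt5_Ef_unique_general
    (asa aas aal als acs bls bcs ρ N : ℝ)
    (hasa : 0 < asa) (haas : 0 < aas) (haal : 0 < aal)
    (hals : 0 < als) (hacs : 0 < acs) (hbls : 0 < bls)
    (hρ : 0 < ρ) (hN : 0 < N) :
    let η₁ := 1 / ((asa / (aas + aal)) * (1 + aal / als))
    let ξ₁ := (aal * bls / (als * (aas + aal))) / ((asa / (aas + aal)) * (1 + aal / als))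
    let Lf := ((ρ * N * ξ₁ - 1 - η₁) +
        Real.sqrt ((ρ * N * ξ₁ - 1 - η₁) ^ 2 + 4 * ξ₁ * ρ * N)) /
      (2 * ξ₁ * (1 + als / aal))
    let Af := (als / aal) * Lf
    (0 ≤ Af ∧ 0 ≤ Lf ∧ Af + Lf + 0 ≤ ρ * N ∧
      (asa + bls * Lf + bcs * 0) * (ρ * N - Af - Lf - 0) - (aas + aal) * Af = 0 ∧
      aal * Af - als * Lf = 0 ∧ -acs * (0 : ℝ) = 0) ∧
    ∀ A L C : ℝ, 0 ≤ A → 0 ≤ L → 0 ≤ C → A + L + C ≤ ρ * N →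
      (asa + bls * L + bcs * C) * (ρ * N - A - L - C) - (aas + aal) * A = 0 →
      aal * A - als * L = 0 → -acs * C = 0 →
      A = Af ∧ L = Lf ∧ C = 0 := by
  intro η₁ ξ₁ Lf Af
  have hρN : 0 < ρ * N := mul_pos hρ hN
  have hξ := S1.ξ₁_pos hasa haas haal hals hbls
  have hLf : Lf =
      quadPosRoot (S1.ξ₁ asa aas aal als bls) (S1.μ₁ asa aas aal als bls ρ N) (ρ * N) /
        (1 + als / aal) := by
    rw [quadPosRoot, div_div, ← mul_assoc _ ρ N]
    rfl
  have hk : 0 < 1 + als / aal := by positivity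
  have hroot_pos := quadPosRoot_pos (S1.μ₁ asa aas aal als bls ρ N) hξ hρN
  have hroot := (eq_quadPosRoot_iff _ hξ hρN hroot_pos.le).mpr rfl
  have hLf_pos : 0 < Lf := hLf ▸ div_pos hroot_pos hk
  have hrate_f : (asa + bls * Lf + bcs * 0) * (ρ * N - Af - Lf - 0) - (aas + aal) * Af = 0 := by
    rw [S1.rateA_eq_quadratic _ _ _ _ hasa haas haal hals, hLf, mul_div_cancel₀ _ hk.ne', hroot,
      mul_zero]
  have hAf_nonneg : 0 ≤ Af := mul_nonneg (by positivity) hLf_pos.le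
  have hrate_coeff : 0 < asa + bls * Lf + bcs * 0 := by
    rw [mul_zero, add_zero]; exact add_pos_of_pos_of_nonneg hasa (mul_nonneg hbls.le hLf_pos.le)
  refine ⟨⟨hAf_nonneg, hLf_pos.le,
    S1.add_le_of_rateA_eq_zero hrate_coeff (by positivity) hAf_nonneg hrate_f, hrate_f,
    by rw [← mul_assoc, mul_div_cancel₀ _ haal.ne', sub_self], mul_zero _⟩, ?_⟩
  intro A L C _ hL _ _ hrate hAL hCrate
  obtain rfl : C = 0 := by simpa [hacs.ne'] using hCrate
  obtain rfl : A = als / aal * L := by field_simp; linarith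
  rw [S1.rateA_eq_quadratic _ _ _ _ hasa haas haal hals] at hrate
  have hquad := (mul_eq_zero.mp hrate).resolve_left (neg_ne_zero.mpr hasa.ne')
  have hL_eq : L = Lf := by
    rw [hLf, ← (eq_quadPosRoot_iff _ hξ hρN (by positivity)).mp hquad,
      mul_div_cancel_left₀ _ hk.ne']
  exact ⟨by rw [hL_eq], hL_eq, rfl⟩

/-- E^f = (A^f, L^f, 0) is the unique equilibrium of subsystem S₁
in the region Γ = {A,L,C ≥ 0, A+L+C ≤ ρN}. -/
theorem stmt5_Ef_unique
    (asa aas aal als acs bls bcs ρ N : ℝ)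
    (hasa : 0 < asa) (haas : 0 < aas) (haal : 0 < aal)
    (hals : 0 < als) (hacs : 0 < acs) (hbls : 0 < bls) (hbcs : 0 < bcs)
    (hρ : 0 < ρ) (hρ1 : ρ < 1) (hN : 0 < N) :
    let η₁ := 1 / ((asa / (aas + aal)) * (1 + aal / als))
    let ξ₁ := (aal * bls / (als * (aas + aal))) / ((asa / (aas + aal)) * (1 + aal / als))
    let Lf := ((ρ * N * ξ₁ - 1 - η₁) +
        Real.sqrt ((ρ * N * ξ₁ - 1 - η₁) ^ 2 + 4 * ξ₁ * ρ * N)) /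
      (2 * ξ₁ * (1 + als / aal))
    let Af := (als / aal) * Lf
    (0 ≤ Af ∧ 0 ≤ Lf ∧ Af + Lf + 0 ≤ ρ * N ∧
      (asa + bls * Lf + bcs * 0) * (ρ * N - Af - Lf - 0) - (aas + aal) * Af = 0 ∧
      aal * Af - als * Lf = 0 ∧ -acs * (0 : ℝ) = 0) ∧
    ∀ A L C : ℝ, 0 ≤ A → 0 ≤ L → 0 ≤ C → A + L + C ≤ ρ * N →
      (asa + bls * L + bcs * C) * (ρ * N - A - L - C) - (aas + aal) * A = 0 →
      aal * A - als * L = 0 → -acs * C = 0 →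
      A = Af ∧ L = Lf ∧ C = 0 :=
  stmt5_Ef_unique_general asa aas aal als acs bls bcs ρ N hasa haas haal hals hacs hbls hρ hN
end

section
/- Define η₂ = 1/((α_sa/(α_as+α_al))[1 + α_al/(α_ls+α_lc) + α_al α_lc/((α_ls+α_lc)α_cs)]) and ξ₂ = (β_ls α_al/(α_lc+α_ls) + β_cs α_al α_lc/(α_cs(α_lc+α_ls))) / (α_sa[1 + α_al/(α_ls+α_lc) + α_al α_lc/((α_ls+α_lc)α_cs)]). Then C^s = [ρN ξ₂ - 1 - η₂ + √((ρN ξ₂ - 1 - η₂)² + 4ξ₂ρN)] / (2ξ₂[1 + α_cs/α_lc + α_cs(α_lc+α_ls)/(α_al α_lc)]) is positive, and with L^s = (α_cs/α_lc)C^s and A^s = ((α_lc+α_ls)/α_al)L^s, the point (A^s, L^s, C^s) is an equilibrium of subsystem S₂ (the system with Q₁ = 1). -/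
/-!
Choosing `L = (α_cs/α_lc) C` and `A = ((α_lc+α_ls)/α_al) L` solves the two linear equations.
On this line `A + L + C = K C`, `β_ls L + β_cs C = α_sa ξ₂ (K C)` and `(α_as+α_al) A = α_sa η₂ (K C)`,
so `dA/dt = 0` becomes the quadratic `ξ₂ y² - (ρNξ₂ - 1 - η₂) y - ρN = 0` in the total `y = K C`.
Its constant term is negative, so it has exactly one positive root, and `C^s` is that root over `K`.
-/

open Real

theorem quadratic_pos_root_pos {a c : ℝ} (b : ℝ) (ha : 0 < a) (hc : 0 < c) :
    0 < (b + √(b ^ 2 + 4 * a * c)) / (2 * a) := by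
  have hsqrt : |b| < √(b ^ 2 + 4 * a * c) := by
    rw [← sqrt_sq_eq_abs]
    exact sqrt_lt_sqrt (sq_nonneg b) (by nlinarith [mul_pos ha hc])
  have : 0 < b + √(b ^ 2 + 4 * a * c) := by linarith [neg_abs_le b]
  positivity

theorem quadratic_pos_root_eq_zero {a b c y : ℝ} (ha : a ≠ 0) (hd : 0 ≤ b ^ 2 + 4 * a * c)
    (hy : y = (b + √(b ^ 2 + 4 * a * c)) / (2 * a)) :
    a * y ^ 2 - b * y - c = 0 := by
  have hs := sq_sqrt hd
  subst hy
  generalize √(b ^ 2 + 4 * a * c) = s at hs ⊢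
  field_simp
  linear_combination hs

namespace S2

variable {asa aas aal alc als acs bls bcs : ℝ}

theorem dA_eq_zero_of_root {ρ N η ξ A L C y : ℝ}
    (htotal : A + L + C = y) (hrecruit : bls * L + bcs * C = asa * ξ * y)
    (houtflow : (aas + aal) * A = asa * η * y)
    (hroot : ξ * y ^ 2 - (ρ * N * ξ - 1 - η) * y - ρ * N = 0) :
    (asa + bls * L + bcs * C) * (ρ * N - A - L - C) - (aas + aal) * A = 0 := by
  linear_combination (ρ * N - y) * hrecruit - (asa + bls * L + bcs * C) * htotal - houtflow
    - asa * hroot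

theorem total_eq (haal : aal ≠ 0) (halc : alc ≠ 0) (C : ℝ) :
    (alc + als) / aal * (acs / alc * C) + acs / alc * C + C
      = (1 + acs / alc + acs * (alc + als) / (aal * alc)) * C := by
  field_simp
  ring

theorem recruitment_eq {ξ : ℝ} (hasa : 0 < asa) (haal : 0 < aal) (halc : 0 < alc)
    (hals : 0 < als) (hacs : 0 < acs)
    (hξ : ξ = (bls * aal / (alc + als) + bcs * aal * alc / (acs * (alc + als))) /
      (asa * (1 + aal / (als + alc) + aal * alc / ((als + alc) * acs)))) (C : ℝ) :
    bls * (acs / alc * C) + bcs * C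
      = asa * ξ * ((1 + acs / alc + acs * (alc + als) / (aal * alc)) * C) := by
  subst hξ
  field_simp
  ring

theorem outflow_eq {η : ℝ} (hasa : 0 < asa) (haal : 0 < aal) (halc : 0 < alc)
    (hals : 0 < als) (hacs : 0 < acs)
    (hη : η = 1 / ((asa / (aas + aal)) *
      (1 + aal / (als + alc) + aal * alc / ((als + alc) * acs)))) (C : ℝ) :
    (aas + aal) * ((alc + als) / aal * (acs / alc * C))
      = asa * η * ((1 + acs / alc + acs * (alc + als) / (aal * alc)) * C) := by
  subst hη
  field_simp
  ring

end S2

theorem stmt6_Es_equilibrium_general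
    (asa aas aal alc als acs bls bcs ρ N : ℝ)
    (hasa : 0 < asa) (haal : 0 < aal) (halc : 0 < alc)
    (hals : 0 < als) (hacs : 0 < acs) (hbls : 0 < bls) (hbcs : 0 < bcs)
    (hρ : 0 < ρ) (hN : 0 < N) :
    let η₂ := 1 / ((asa / (aas + aal)) *
      (1 + aal / (als + alc) + aal * alc / ((als + alc) * acs)))
    let ξ₂ := (bls * aal / (alc + als) + bcs * aal * alc / (acs * (alc + als))) /
      (asa * (1 + aal / (als + alc) + aal * alc / ((als + alc) * acs)))
    let Cs := (ρ * N * ξ₂ - 1 - η₂ +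
        Real.sqrt ((ρ * N * ξ₂ - 1 - η₂) ^ 2 + 4 * ξ₂ * ρ * N)) /
      (2 * ξ₂ * (1 + acs / alc + acs * (alc + als) / (aal * alc)))
    let Ls := (acs / alc) * Cs
    let As := ((alc + als) / aal) * Ls
    0 < Cs ∧
    (asa + bls * Ls + bcs * Cs) * (ρ * N - As - Ls - Cs) - (aas + aal) * As = 0 ∧
    aal * As - (alc + als) * Ls = 0 ∧
    alc * Ls - acs * Cs = 0 := by
  intro η₂ ξ₂ Cs Ls As
  have hξ : 0 < ξ₂ := by unfold ξ₂; positivity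
  set K := 1 + acs / alc + acs * (alc + als) / (aal * alc)
  have hK : 0 < K := by positivity
  obtain ⟨y, hy⟩ : ∃ y, y = (ρ * N * ξ₂ - 1 - η₂ +
      √((ρ * N * ξ₂ - 1 - η₂) ^ 2 + 4 * ξ₂ * (ρ * N))) / (2 * ξ₂) := ⟨_, rfl⟩
  have hCs : Cs = y / K := by rw [hy, div_div, ← mul_assoc (4 * ξ₂)]
  have hy_pos : 0 < y := hy ▸ quadratic_pos_root_pos _ hξ (mul_pos hρ hN)
  have hroot := quadratic_pos_root_eq_zero hξ.ne' (by positivity) hy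
  have hKC : K * Cs = y := by rw [hCs, mul_div_cancel₀ _ hK.ne']
  refine ⟨hCs ▸ div_pos hy_pos hK, ?_, ?_, ?_⟩
  · refine S2.dA_eq_zero_of_root ?_ ?_ ?_ hroot
    · rw [← hKC]; exact S2.total_eq haal.ne' halc.ne' Cs
    · rw [← hKC]; exact S2.recruitment_eq hasa haal halc hals hacs rfl Cs
    · rw [← hKC]; exact S2.outflow_eq hasa haal halc hals hacs rfl Cs
  · simp only [As, ← mul_assoc, mul_div_cancel₀ _ haal.ne', sub_self]
  · simp only [Ls, ← mul_assoc, mul_div_cancel₀ _ halc.ne', sub_self]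

/-- C^s is positive and (A^s, L^s, C^s) is an equilibrium of
subsystem S₂ (Q₁ = 1). -/
theorem stmt6_Es_equilibrium
    (asa aas aal alc als acs bls bcs ρ N : ℝ)
    (hasa : 0 < asa) (haas : 0 < aas) (haal : 0 < aal) (halc : 0 < alc)
    (hals : 0 < als) (hacs : 0 < acs) (hbls : 0 < bls) (hbcs : 0 < bcs)
    (hρ : 0 < ρ) (hρ1 : ρ < 1) (hN : 0 < N) :
    let η₂ := 1 / ((asa / (aas + aal)) *
      (1 + aal / (als + alc) + aal * alc / ((als + alc) * acs)))
    let ξ₂ := (bls * aal / (alc + als) + bcs * aal * alc / (acs * (alc + als))) /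
      (asa * (1 + aal / (als + alc) + aal * alc / ((als + alc) * acs)))
    let Cs := (ρ * N * ξ₂ - 1 - η₂ +
        Real.sqrt ((ρ * N * ξ₂ - 1 - η₂) ^ 2 + 4 * ξ₂ * ρ * N)) /
      (2 * ξ₂ * (1 + acs / alc + acs * (alc + als) / (aal * alc)))
    let Ls := (acs / alc) * Cs
    let As := ((alc + als) / aal) * Ls
    0 < Cs ∧
    (asa + bls * Ls + bcs * Cs) * (ρ * N - As - Ls - Cs) - (aas + aal) * As = 0 ∧
    aal * As - (alc + als) * Ls = 0 ∧
    alc * Ls - acs * Cs = 0 :=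
  stmt6_Es_equilibrium_general asa aas aal alc als acs bls bcs ρ N hasa haal halc hals hacs hbls
    hbcs hρ hN
end

section
/- The equilibrium E^f = (A^f, L^f, 0) of subsystem S₁ is locally asymptotically stable: the Jacobian of subsystem S₁ evaluated at E^f has all eigenvalues with negative real part. -/
/-- the Jacobian of subsystem S₁ at E^f = (A^f, L^f, 0) has all
eigenvalues with negative real part. -/
theorem stmt7_Ef_stable
    (asa aas aal als acs bls bcs ρ N Af Lf : ℝ)
    (hasa : 0 < asa) (haas : 0 < aas) (haal : 0 < aal)
    (hals : 0 < als) (hacs : 0 < acs) (hbls : 0 < bls) (hbcs : 0 < bcs)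
    (hρ : 0 < ρ) (hρ1 : ρ < 1) (hN : 0 < N)
    (hAf : 0 < Af) (hLf : 0 < Lf) (hΓ : Af + Lf ≤ ρ * N)
    (heq1 : aal * Af = als * Lf)
    (heq2 : (asa + bls * Lf) * (ρ * N - Af - Lf) = (aas + aal) * Af) :
    let J : Matrix (Fin 3) (Fin 3) ℝ :=
      !![-(asa + bls * Lf) - (aas + aal),
          bls * (ρ * N - Af - Lf) - (asa + bls * Lf),
          bcs * (ρ * N - Af - Lf) - (asa + bls * Lf);
        aal, -als, 0;
        0, 0, -acs]
    ∀ μ : ℂ, (J.map (algebraMap ℝ ℂ)).charpoly.IsRoot μ → μ.re < 0 := by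
  intro J μ hroot
  set a : ℝ := -(asa + bls * Lf) - (aas + aal) with ha
  set b : ℝ := bls * (ρ * N - Af - Lf) - (asa + bls * Lf) with hb
  set p : ℝ := als - a with hp
  set q : ℝ := (-a) * als - aal * b with hqdef
  have h0 : ((J.map (algebraMap ℝ ℂ)).charpoly).eval μ = 0 := hroot
  rw [Matrix.charpoly, ← Polynomial.coe_evalRingHom, RingHom.map_det,
    Matrix.det_fin_three] at h0
  simp only [RingHom.mapMatrix_apply, Matrix.charmatrix_apply, Matrix.map_apply, J, Matrix.cons_val', Matrix.cons_val_zero,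
    Matrix.cons_val_one, Matrix.head_cons, Matrix.empty_val', Matrix.cons_val_fin_one,
    Matrix.head_fin_const, Matrix.of_apply, Matrix.cons_val_two, Matrix.tail_cons,
    Matrix.one_apply, Fin.ext_iff, RingHom.coe_coe, Polynomial.eval_sub, Polynomial.eval_add,
    Polynomial.eval_mul, Polynomial.eval_X, Polynomial.eval_C, Polynomial.eval_neg,
    map_zero, map_neg, if_true, if_false] at h0
  revert h0; intro h0; simp only [Matrix.diagonal_apply, Polynomial.coe_evalRingHom, map_sub, map_zero, map_neg,
    Polynomial.eval_X, Polynomial.eval_C, if_true, if_false, reduceIte] at h0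
  norm_num [show ((1:Fin 3) = 2) = False from by decide, show ((2:Fin 3) = 1) = False from by decide,
    show ((2:Fin 3) = 0) = False from by decide, show ((0:Fin 3) = 2) = False from by decide,
    show ((0:Fin 3) = 1) = False from by decide, show ((1:Fin 3) = 0) = False from by decide] at h0
  have hfac : (μ + (acs:ℂ)) * (μ^2 + (p:ℂ)*μ + (q:ℂ)) = 0 := by
    rw [hp, hqdef, hb, ha]; push_cast; linear_combination h0
  have hp0 : 0 < p := by rw [hp, ha]; nlinarith
  have hq0 : 0 < q := by
    have key : (asa + bls*Lf) * q = (asa + bls*Lf)^2*(als+aal) + als*(aas+aal)*asa := by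
      rw [hqdef, hb, ha]; linear_combination (-aal*bls)*heq2 - bls*(aas+aal)*heq1
    have h1 : 0 < asa + bls*Lf := by positivity
    nlinarith [key, mul_pos (mul_pos h1 h1) (show (0:ℝ) < als+aal by linarith),
      mul_pos (mul_pos hals (show (0:ℝ) < aas+aal by linarith)) hasa]
  rcases mul_eq_zero.mp hfac with h | h
  · have hre : μ.re = -acs := by
      have := congrArg Complex.re h
      simp at this; linarith
    linarith
  · simp only [Complex.ext_iff, pow_two, Complex.add_re, Complex.add_im, Complex.mul_re,
      Complex.mul_im, Complex.ofReal_re, Complex.ofReal_im, Complex.zero_re, Complex.zero_im] at h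
    obtain ⟨hre, him⟩ := h
    clear h0 hfac hroot
    by_contra hx
    push_neg at hx
    have h2xp : 0 < 2*μ.re + p := by linarith
    have h3 : μ.im*μ.im*(2*μ.re + p) = 0 := by linear_combination μ.im * him
    have hyy : μ.im*μ.im = 0 := by
      rcases mul_eq_zero.mp h3 with h' | h'
      · exact h'
      · linarith
    nlinarith [mul_self_nonneg μ.re, mul_nonneg hp0.le hx]
end

section
/- The equilibrium E^s = (A^s, L^s, C^s) of subsystem S₂ is locally asymptotically stable: the Jacobian of subsystem S₂ evaluated at E^s has all eigenvalues with negative real part. -/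
set_option maxHeartbeats 1000000

/-- Routh–Hurwitz for a monic real cubic: if `b > 0`, `d > 0`, `d < b*c`, then every
complex root of `X^3 + b X^2 + c X + d` has negative real part. -/
lemma routh3 (b c d : ℝ) (hb : 0 < b) (hd : 0 < d) (hbc : d < b * c) (μ : ℂ)
    (h : μ ^ 3 + (b : ℂ) * μ ^ 2 + (c : ℂ) * μ + (d : ℂ) = 0) : μ.re < 0 := by
  have hc : 0 < c := by nlinarith
  by_contra hx
  push_neg at hx
  set x := μ.re with hxdef
  set y := μ.im with hydef
  have hre : (μ ^ 3 + (b : ℂ) * μ ^ 2 + (c : ℂ) * μ + (d : ℂ)).re = 0 := by rw [h]; simp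
  have him : (μ ^ 3 + (b : ℂ) * μ ^ 2 + (c : ℂ) * μ + (d : ℂ)).im = 0 := by rw [h]; simp
  simp only [Complex.add_re, Complex.add_im, Complex.mul_re, Complex.mul_im, pow_succ, pow_zero,
    one_mul, Complex.one_re, Complex.one_im, Complex.ofReal_re, Complex.ofReal_im,
    ← hxdef, ← hydef] at hre him
  have Hre : x ^ 3 - 3 * x * y ^ 2 + b * x ^ 2 - b * y ^ 2 + c * x + d = 0 := by
    linear_combination hre
  have Him : 3 * x ^ 2 * y - y ^ 3 + 2 * b * x * y + c * y = 0 := by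
    linear_combination him
  rcases eq_or_ne y 0 with hy | hy
  · rw [hy] at Hre
    nlinarith [mul_nonneg (mul_nonneg hx hx) hx, mul_nonneg hb.le (mul_nonneg hx hx),
      mul_nonneg hc.le hx]
  · have hM : y ^ 2 = 3 * x ^ 2 + 2 * b * x + c := by
      have h2 : y * (3 * x ^ 2 - y ^ 2 + 2 * b * x + c) = 0 := by linear_combination Him
      rcases mul_eq_zero.mp h2 with h3 | h3
      · exact absurd h3 hy
      · linarith
    have key : 8 * x ^ 3 + 8 * b * x ^ 2 + 2 * (c + b ^ 2) * x + b * c - d = 0 := by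
      linear_combination -Hre - (3 * x + b) * hM
    nlinarith [mul_nonneg (mul_nonneg hx hx) hx, mul_nonneg hb.le (mul_nonneg hx hx),
      mul_nonneg hc.le hx, mul_nonneg (mul_nonneg hb.le hb.le) hx]

/-- The Routh–Hurwitz coefficient inequalities for the Jacobian of subsystem S₂
at the interior equilibrium. -/
lemma aux_coeffs (asa aas aal alc als acs bls bcs S G Ls Cs As : ℝ)
    (hasa : 0 < asa) (haas : 0 < aas) (haal : 0 < aal) (halc : 0 < alc)
    (hals : 0 < als) (hacs : 0 < acs) (hbls : 0 < bls) (hbcs : 0 < bcs)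
    (hLs : 0 < Ls) (hCs : 0 < Cs) (hAs : 0 < As) (hG : 0 ≤ G)
    (hS : S = asa + bls * Ls + bcs * Cs)
    (heq1 : alc * Ls = acs * Cs) (heq2 : aal * As = (alc + als) * Ls)
    (heq3 : S * G = (aas + aal) * As) :
    0 < (S + aas + aal) * (alc + als) * acs + aal * acs * S + aal * alc * S
        - aal * G * (acs * bls + alc * bcs) ∧
    (S + aas + aal) * (alc + als) * acs + aal * acs * S + aal * alc * S
        - aal * G * (acs * bls + alc * bcs)
      < ((S + aas + aal) + (alc + als) + acs) *
        ((S + aas + aal) * (alc + als) + (S + aas + aal) * acs + (alc + als) * acs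
          + aal * S - aal * bls * G) := by
  have h1 : 0 < S := by rw [hS]; positivity
  have hq : 0 < alc + als := by linarith
  have hp : 0 < S + aas + aal := by linarith
  set d : ℝ := (S + aas + aal) * (alc + als) * acs + aal * acs * S + aal * alc * S
      - aal * G * (acs * bls + alc * bcs) with hd_def
  set b : ℝ := (S + aas + aal) + (alc + als) + acs with hb_def
  set c : ℝ := (S + aas + aal) * (alc + als) + (S + aas + aal) * acs + (alc + als) * acs
      + aal * S - aal * bls * G with hc_def
  have keyd : S * d = S ^ 2 * (alc + als) * acs + aal * S ^ 2 * (acs + alc)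
      + asa * (aas + aal) * (alc + als) * acs := by
    rw [hd_def]
    linear_combination (-aal * (acs * bls + alc * bcs)) * heq3
      + (-(aas + aal) * (acs * bls + alc * bcs)) * heq2
      + (-(aas + aal) * (alc + als) * bcs) * heq1
      + ((aas + aal) * (alc + als) * acs) * hS
  have hS2 : 0 < S ^ 2 := pow_pos h1 2
  have hSd : 0 < S * d := by
    rw [keyd]
    have A : 0 < S ^ 2 * (alc + als) * acs := mul_pos (mul_pos hS2 hq) hacs
    have B : 0 < aal * S ^ 2 * (acs + alc) := mul_pos (mul_pos haal hS2) (add_pos hacs halc)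
    have C : 0 < asa * (aas + aal) * (alc + als) * acs :=
      mul_pos (mul_pos (mul_pos hasa (add_pos haas haal)) hq) hacs
    linarith [A, B, C]
  have hd : 0 < d := by nlinarith [hSd, h1]
  refine ⟨hd, ?_⟩
  have keybc : S * (b * c - d) =
      S * ((S + aas + aal) + (alc + als)) * ((alc + als) + acs) * ((S + aas + aal) + acs)
      + aal * S ^ 2 * ((S + aas + aal) + als)
      + aal * alc * bcs * S * G
      - bls * Ls * (aas + aal) * (alc + als) * ((S + aas + aal) + (alc + als)) := by
    rw [hb_def, hc_def, hd_def]
    linear_combination (-bls * ((S + aas + aal) + (alc + als)) * aal) * heq3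
      + (-bls * ((S + aas + aal) + (alc + als)) * (aas + aal)) * heq2
  have t1 : 0 < S - bls * Ls := by
    rw [hS]; nlinarith [mul_pos hbcs hCs]
  have hX : 0 < ((alc + als) + acs) * ((S + aas + aal) + acs) := by positivity
  have t2 : 0 < ((alc + als) + acs) * ((S + aas + aal) + acs) - (aas + aal) * (alc + als) := by
    nlinarith [mul_pos hq h1, mul_pos hacs hp, mul_pos hq hacs, mul_pos hacs hacs]
  have hpq : 0 < (S + aas + aal) + (alc + als) := by linarith
  have hSbc : 0 < S * (b * c - d) := by
    rw [keybc]
    have P1 : 0 < (S - bls * Ls) * (((alc + als) + acs) * ((S + aas + aal) + acs))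
        * ((S + aas + aal) + (alc + als)) := mul_pos (mul_pos t1 hX) hpq
    have P2 : 0 < (bls * Ls) * ((((alc + als) + acs) * ((S + aas + aal) + acs))
        - (aas + aal) * (alc + als)) * ((S + aas + aal) + (alc + als)) :=
      mul_pos (mul_pos (mul_pos hbls hLs) t2) hpq
    have P3 : 0 < aal * S ^ 2 * ((S + aas + aal) + als) :=
      mul_pos (mul_pos haal hS2) (by linarith : (0:ℝ) < (S + aas + aal) + als)
    have P4 : 0 ≤ aal * alc * bcs * S * G :=
      mul_nonneg (mul_nonneg (mul_nonneg (mul_nonneg haal.le halc.le) hbcs.le) h1.le) hG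
    linarith [P1, P2, P3, P4]
  nlinarith [hSbc, h1]

/-- the Jacobian of subsystem S₂ at E^s = (A^s, L^s, C^s) has all
eigenvalues with negative real part. -/
theorem stmt8_Es_stable
    (asa aas aal alc als acs bls bcs ρ N As Ls Cs : ℝ)
    (hasa : 0 < asa) (haas : 0 < aas) (haal : 0 < aal) (halc : 0 < alc)
    (hals : 0 < als) (hacs : 0 < acs) (hbls : 0 < bls) (hbcs : 0 < bcs)
    (hρ : 0 < ρ) (hρ1 : ρ < 1) (hN : 0 < N)
    (hAs : 0 < As) (hLs : 0 < Ls) (hCs : 0 < Cs) (hΓ : As + Ls + Cs ≤ ρ * N)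
    (heq1 : alc * Ls = acs * Cs)
    (heq2 : aal * As = (alc + als) * Ls)
    (heq3 : (asa + bls * Ls + bcs * Cs) * (ρ * N - As - Ls - Cs) = (aas + aal) * As) :
    let J : Matrix (Fin 3) (Fin 3) ℝ :=
      !![-(asa + bls * Ls + bcs * Cs) - (aas + aal),
          bls * (ρ * N - As - Ls - Cs) - (asa + bls * Ls + bcs * Cs),
          bcs * (ρ * N - As - Ls - Cs) - (asa + bls * Ls + bcs * Cs);
        aal, -(alc + als), 0;
        0, alc, -acs]
    ∀ μ : ℂ, (J.map (algebraMap ℝ ℂ)).charpoly.IsRoot μ → μ.re < 0 := by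
  intro J μ hroot
  have h0 : ((J.map (algebraMap ℝ ℂ)).charpoly).eval μ = 0 := hroot
  rw [Matrix.charpoly, Matrix.det_fin_three] at h0
  simp [J, Matrix.charmatrix_apply, Matrix.map_apply] at h0
  have hG0 : 0 ≤ ρ * N - As - Ls - Cs := by linarith
  obtain ⟨hd, hbc⟩ := aux_coeffs asa aas aal alc als acs bls bcs
    (asa + bls * Ls + bcs * Cs) (ρ * N - As - Ls - Cs) Ls Cs As
    hasa haas haal halc hals hacs hbls hbcs hLs hCs hAs hG0 rfl heq1 heq2 heq3
  have hb : 0 < ((asa + bls * Ls + bcs * Cs) + aas + aal) + (alc + als) + acs := by positivity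
  refine routh3 (((asa + bls * Ls + bcs * Cs) + aas + aal) + (alc + als) + acs)
    (((asa + bls * Ls + bcs * Cs) + aas + aal) * (alc + als)
      + ((asa + bls * Ls + bcs * Cs) + aas + aal) * acs + (alc + als) * acs
      + aal * (asa + bls * Ls + bcs * Cs)
      - aal * bls * (ρ * N - As - Ls - Cs))
    (((asa + bls * Ls + bcs * Cs) + aas + aal) * (alc + als) * acs
      + aal * acs * (asa + bls * Ls + bcs * Cs) + aal * alc * (asa + bls * Ls + bcs * Cs)
      - aal * (ρ * N - As - Ls - Cs) * (acs * bls + alc * bcs)) hb hd hbc μ ?_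
  push_cast at h0 ⊢
  linear_combination h0
end

section
/- Suppose α_cs/α_ls < min{1, β_cs/β_ls}. Then 𝒩₁(Θ) > 𝒩₂(Θ) for all Θ > 0, where 𝒩ᵢ(Θ) = Θ/ρ + Θηᵢ/(ρ(1+ξᵢΘ)). -/
/-! Both `ξᵢ` are multiples `kᵢ ηᵢ` of the corresponding `ηᵢ`, so
`Θ ηᵢ / (1 + ξᵢ Θ) = Θ / (1/ηᵢ + kᵢ Θ)`. It therefore suffices that `η₂ < η₁` and `k₁ ≤ k₂`;
the first is `α_cs < α_ls` and the second is `α_cs β_ls < α_ls β_cs`, the two halves of the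
hypothesis. -/

lemma mul_div_mul_one_add_lt_of_lt {ρ Θ η₁ η₂ k₁ k₂ : ℝ} (hρ : 0 < ρ) (hΘ : 0 < Θ)
    (hη₂ : 0 ≤ η₂) (hη : η₂ < η₁) (hk₁ : 0 ≤ k₁) (hk : k₁ ≤ k₂) :
    Θ * η₂ / (ρ * (1 + k₂ * η₂ * Θ)) < Θ * η₁ / (ρ * (1 + k₁ * η₁ * Θ)) := by
  have hη₁ : 0 < η₁ := hη₂.trans_lt hη
  have hk₂ : 0 ≤ k₂ := hk₁.trans hk
  rw [div_lt_div_iff₀ (by positivity) (by positivity)]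
  have hcross : η₂ * (1 + k₁ * η₁ * Θ) < η₁ * (1 + k₂ * η₂ * Θ) := by
    nlinarith [mul_nonneg (mul_nonneg (mul_nonneg hη₂ hη₁.le) hΘ.le) (sub_nonneg.2 hk)]
  nlinarith [mul_pos hρ hΘ]

lemma div_lt_div_add_div_of_lt {a l c s : ℝ} (ha : 0 < a) (hc : 0 < c) (hs : 0 < s)
    (hsl : s < l) :
    a / l < a / (l + c) + a * c / ((l + c) * s) := by
  have hl : 0 < l := hs.trans hsl
  rw [div_add_div _ _ (by positivity) (by positivity), div_lt_div_iff₀ (by positivity)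
    (by positivity)]
  nlinarith [mul_pos (mul_pos ha hc) (mul_pos (add_pos hl hc) (sub_pos.2 hsl))]

lemma mul_div_lt_div_add_div_of_mul_lt {a l c s b b' : ℝ} (ha : 0 < a) (hc : 0 < c)
    (hl : 0 < l) (hs : 0 < s) (hb : s * b < l * b') :
    a * b / l < b * a / (c + l) + b' * a * c / (s * (c + l)) := by
  rw [div_add_div _ _ (by positivity) (by positivity), div_lt_div_iff₀ hl (by positivity)]
  nlinarith [mul_pos (mul_pos ha hc) (mul_pos (mul_pos hs (add_pos hc hl)) (sub_pos.2 hb))]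

theorem stmt14_N1_gt_N2_general
    (asa aas aal alc als acs bls bcs ρ : ℝ)
    (hasa : 0 < asa) (haas : 0 < aas) (haal : 0 < aal) (halc : 0 < alc)
    (hals : 0 < als) (hacs : 0 < acs) (hbls : 0 < bls)
    (hρ : 0 < ρ)
    (hcond : acs / als < min 1 (bcs / bls)) :
    let η₁ := 1 / ((asa / (aas + aal)) * (1 + aal / als))
    let ξ₁ := (aal * bls / (als * (aas + aal))) * (1 / ((asa / (aas + aal)) * (1 + aal / als)))
    let D := 1 + aal / (als + alc) + aal * alc / ((als + alc) * acs)
    let η₂ := (aas + aal) / (asa * D)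
    let ξ₂ := (bls * aal / (alc + als) + bcs * aal * alc / (acs * (alc + als))) / (asa * D)
    let N₁ := fun Θ : ℝ => Θ / ρ + Θ * η₁ / (ρ * (1 + ξ₁ * Θ))
    let N₂ := fun Θ : ℝ => Θ / ρ + Θ * η₂ / (ρ * (1 + ξ₂ * Θ))
    ∀ Θ : ℝ, 0 < Θ → N₂ Θ < N₁ Θ := by
  intro η₁ ξ₁ D η₂ ξ₂ N₁ N₂ Θ hΘ
  obtain ⟨hcs_lt_ls, hratio⟩ := lt_min_iff.1 hcond
  rw [div_lt_one hals] at hcs_lt_ls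
  rw [div_lt_div_iff₀ hals hbls] at hratio
  have hsum : 0 < aas + aal := add_pos haas haal
  have hη₁ : η₁ = (aas + aal) / (asa * (1 + aal / als)) := by
    simp only [η₁]
    rw [div_mul_eq_mul_div, one_div_div]
  have hη : η₂ < η₁ := by
    rw [hη₁]
    refine div_lt_div_of_pos_left hsum (by positivity) (mul_lt_mul_of_pos_left ?_ hasa)
    linarith [div_lt_div_add_div_of_lt haal halc hacs hcs_lt_ls]
  have hξ₂ : ξ₂ = (bls * aal / (alc + als) + bcs * aal * alc / (acs * (alc + als))) /
      (aas + aal) * η₂ := (div_mul_div_cancel₀ hsum.ne').symm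
  have hk : aal * bls / (als * (aas + aal)) ≤
      (bls * aal / (alc + als) + bcs * aal * alc / (acs * (alc + als))) / (aas + aal) := by
    rw [← div_div]
    exact div_le_div_of_nonneg_right
      (mul_div_lt_div_add_div_of_mul_lt haal halc hals hacs (by linarith)).le hsum.le
  show Θ / ρ + Θ * η₂ / (ρ * (1 + ξ₂ * Θ)) < Θ / ρ + Θ * η₁ / (ρ * (1 + ξ₁ * Θ))
  rw [hξ₂]
  exact (add_lt_add_iff_left _).2 (mul_div_mul_one_add_lt_of_lt hρ hΘ (by positivity) hη
    (by positivity) hk)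

theorem stmt14_N1_gt_N2
    (asa aas aal alc als acs bls bcs ρ : ℝ)
    (hasa : 0 < asa) (haas : 0 < aas) (haal : 0 < aal) (halc : 0 < alc)
    (hals : 0 < als) (hacs : 0 < acs) (hbls : 0 < bls) (hbcs : 0 < bcs)
    (hρ : 0 < ρ) (hρ1 : ρ < 1)
    (hcond : acs / als < min 1 (bcs / bls)) :
    let η₁ := 1 / ((asa / (aas + aal)) * (1 + aal / als))
    let ξ₁ := (aal * bls / (als * (aas + aal))) * (1 / ((asa / (aas + aal)) * (1 + aal / als)))
    let D := 1 + aal / (als + alc) + aal * alc / ((als + alc) * acs)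
    let η₂ := (aas + aal) / (asa * D)
    let ξ₂ := (bls * aal / (alc + als) + bcs * aal * alc / (acs * (alc + als))) / (asa * D)
    let N₁ := fun Θ : ℝ => Θ / ρ + Θ * η₁ / (ρ * (1 + ξ₁ * Θ))
    let N₂ := fun Θ : ℝ => Θ / ρ + Θ * η₂ / (ρ * (1 + ξ₂ * Θ))
    ∀ Θ : ℝ, 0 < Θ → N₂ Θ < N₁ Θ :=
  stmt14_N1_gt_N2_general asa aas aal alc als acs bls bcs ρ hasa haas haal halc hals hacs hbls hρ
    hcond
end

section
/- Suppose α_cs/α_ls > max{1, β_cs/β_ls}. Then 𝒩₁(Θ) < 𝒩₂(Θ) for all Θ > 0. -/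
/-!
Since `Θ η / (1 + ξ Θ) = Θ / (η⁻¹ + (ξ / η) Θ)`, it suffices that `η₂⁻¹ < η₁⁻¹` and
`ξ₂ / η₂ ≤ ξ₁ / η₁`. Both comparisons have the shape `a/(s+c) · (b + b' c/t) < a b/s`: the left
side is `a/s` times a convex combination of `b` and `b' s/t` with weights `s, c`, which lies below
`b` as soon as `b' s < b t`. With `s, t = α_ls, α_cs` this is `α_ls < α_cs` for the `η`s, and
with `b, b' = β_ls, β_cs` it is `β_cs/β_ls < α_cs/α_ls` for the ratios `ξ/η`.
-/

theorem div_mul_add_div_lt {a b b' s c t : ℝ} (ha : 0 < a) (hs : 0 < s) (hc : 0 < c)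
    (ht : 0 < t) (h : b' * s < b * t) : a / (s + c) * (b + b' * c / t) < a * b / s := by
  rw [div_mul_eq_mul_div, div_lt_div_iff₀ (by positivity) hs, add_div' _ _ _ ht.ne',
    mul_div_assoc', div_mul_eq_mul_div, div_lt_iff₀ ht]
  nlinarith [mul_pos (mul_pos ha hc) (sub_pos.2 h)]

theorem mul_div_mul_one_add_lt {ρ η₁ η₂ ξ₁ ξ₂ Θ : ℝ} (hρ : 0 < ρ) (hΘ : 0 < Θ) (hη₁ : 0 < η₁)
    (hη : η₁ < η₂) (hξ₂ : 0 ≤ ξ₂) (hξ : ξ₂ / η₂ ≤ ξ₁ / η₁) :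
    Θ * η₁ / (ρ * (1 + ξ₁ * Θ)) < Θ * η₂ / (ρ * (1 + ξ₂ * Θ)) := by
  have hη₂ : 0 < η₂ := hη₁.trans hη
  have recip (η ξ : ℝ) (hη : η ≠ 0) :
      Θ * η / (ρ * (1 + ξ * Θ)) = Θ / (ρ * (η⁻¹ + ξ / η * Θ)) := by
    rw [← mul_div_mul_right Θ _ hη]
    congr 1
    field_simp
  rw [recip η₁ ξ₁ hη₁.ne', recip η₂ ξ₂ hη₂.ne']
  exact div_lt_div_of_pos_left hΘ (by positivity) (mul_lt_mul_of_pos_left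
    (add_lt_add_of_lt_of_le (inv_strictAnti₀ hη₁ hη) (mul_le_mul_of_nonneg_right hξ hΘ.le)) hρ)

theorem stmt15_N1_lt_N2_general
    (asa aas aal alc als acs bls bcs ρ : ℝ)
    (hasa : 0 < asa) (haas : 0 < aas) (haal : 0 < aal) (halc : 0 < alc)
    (hals : 0 < als) (hacs : 0 < acs) (hbls : 0 < bls) (hbcs : 0 < bcs)
    (hρ : 0 < ρ)
    (hcond : max 1 (bcs / bls) < acs / als) :
    let η₁ := 1 / ((asa / (aas + aal)) * (1 + aal / als))
    let ξ₁ := (aal * bls / (als * (aas + aal))) * (1 / ((asa / (aas + aal)) * (1 + aal / als)))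
    let D := 1 + aal / (als + alc) + aal * alc / ((als + alc) * acs)
    let η₂ := (aas + aal) / (asa * D)
    let ξ₂ := (bls * aal / (alc + als) + bcs * aal * alc / (acs * (alc + als))) / (asa * D)
    let N₁ := fun Θ : ℝ => Θ / ρ + Θ * η₁ / (ρ * (1 + ξ₁ * Θ))
    let N₂ := fun Θ : ℝ => Θ / ρ + Θ * η₂ / (ρ * (1 + ξ₂ * Θ))
    ∀ Θ : ℝ, 0 < Θ → N₁ Θ < N₂ Θ := by
  intro η₁ ξ₁ D η₂ ξ₂ N₁ N₂ Θ hΘ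
  obtain ⟨hls_cs, hb⟩ := max_lt_iff.mp hcond
  rw [one_lt_div hals] at hls_cs
  rw [div_lt_div_iff₀ hbls hals] at hb
  have hD : D < 1 + aal / als := by
    have hD_eq : D = 1 + aal / (als + alc) * (1 + 1 * alc / acs) := by
      simp only [D, div_eq_mul_inv, mul_inv]; ring
    have key := div_mul_add_div_lt (b := 1) (b' := 1) haal hals halc hacs (by linarith)
    rw [mul_one] at key
    linarith
  have hη : η₁ < η₂ := by
    have hη₂_eq : η₂ = 1 / (asa / (aas + aal) * D) := by
      simp only [η₂]; field_simp
    rw [hη₂_eq]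
    exact one_div_lt_one_div_of_lt (by positivity) (mul_lt_mul_of_pos_left hD (by positivity))
  have hξ : ξ₂ / η₂ ≤ ξ₁ / η₁ := by
    have hratio_eq : ξ₂ / η₂ = aal / (als + alc) * (bls + bcs * alc / acs) / (aas + aal) := by
      simp only [ξ₂, η₂]
      rw [div_div_div_cancel_right₀ (by positivity : asa * D ≠ 0)]
      simp only [div_eq_mul_inv, mul_inv]
      ring
    rw [hratio_eq, mul_div_cancel_right₀ _ (by positivity : η₁ ≠ 0), ← div_div]
    exact div_le_div_of_nonneg_right
      (div_mul_add_div_lt haal hals halc hacs (by linarith)).le (by positivity)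
  exact add_lt_add_right (mul_div_mul_one_add_lt hρ hΘ (by positivity) hη (by positivity) hξ) _

theorem stmt15_N1_lt_N2
    (asa aas aal alc als acs bls bcs ρ : ℝ)
    (hasa : 0 < asa) (haas : 0 < aas) (haal : 0 < aal) (halc : 0 < alc)
    (hals : 0 < als) (hacs : 0 < acs) (hbls : 0 < bls) (hbcs : 0 < bcs)
    (hρ : 0 < ρ) (hρ1 : ρ < 1)
    (hcond : max 1 (bcs / bls) < acs / als) :
    let η₁ := 1 / ((asa / (aas + aal)) * (1 + aal / als))
    let ξ₁ := (aal * bls / (als * (aas + aal))) * (1 / ((asa / (aas + aal)) * (1 + aal / als)))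
    let D := 1 + aal / (als + alc) + aal * alc / ((als + alc) * acs)
    let η₂ := (aas + aal) / (asa * D)
    let ξ₂ := (bls * aal / (alc + als) + bcs * aal * alc / (acs * (alc + als))) / (asa * D)
    let N₁ := fun Θ : ℝ => Θ / ρ + Θ * η₁ / (ρ * (1 + ξ₁ * Θ))
    let N₂ := fun Θ : ℝ => Θ / ρ + Θ * η₂ / (ρ * (1 + ξ₂ * Θ))
    ∀ Θ : ℝ, 0 < Θ → N₁ Θ < N₂ Θ :=
  stmt15_N1_lt_N2_general asa aas aal alc als acs bls bcs ρ hasa haas haal halc hals hacs hbls hbcs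
    hρ hcond
end

section
/- Suppose 1 < α_cs/α_ls < β_cs/β_ls, and let Θ_c = α_sa(1 - α_cs/α_ls)/(β_ls(α_cs/α_ls - β_cs/β_ls)) > 0. Then 𝒩₁(Θ) < 𝒩₂(Θ) for all 0 < Θ < Θ_c, and 𝒩₁(Θ) > 𝒩₂(Θ) for all Θ > Θ_c. -/
/-!
Both curves share the term `Θ / ρ`, so for `Θ > 0` the sign of `𝒩₁(Θ) - 𝒩₂(Θ)` is that of
`η₁ (1 + ξ₂ Θ) - η₂ (1 + ξ₁ Θ) = (η₁ - η₂) + (η₁ ξ₂ - η₂ ξ₁) Θ`, an affine function of `Θ`.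
For the model parameters both coefficients are one positive factor times
`α_sa (α_ls - α_cs)` and `α_ls β_cs - α_cs β_ls` respectively, so the slope is positive
and the affine function vanishes exactly at `Θ_c`.
-/

namespace Switch

noncomputable def N (ρ η ξ Θ : ℝ) : ℝ := Θ / ρ + Θ * η / (ρ * (1 + ξ * Θ))

section Crossing

variable {ρ η₁ ξ₁ η₂ ξ₂ Θc Θ : ℝ}

theorem N_sub_N (hρ : ρ ≠ 0) (h₁ : 1 + ξ₁ * Θ ≠ 0) (h₂ : 1 + ξ₂ * Θ ≠ 0)
    (hroot : η₁ - η₂ + (η₁ * ξ₂ - η₂ * ξ₁) * Θc = 0) :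
    N ρ η₁ ξ₁ Θ - N ρ η₂ ξ₂ Θ =
      Θ * (η₁ * ξ₂ - η₂ * ξ₁) * (Θ - Θc) / (ρ * (1 + ξ₁ * Θ) * (1 + ξ₂ * Θ)) := by
  rw [N, N, add_sub_add_left_eq_sub, div_sub_div _ _ (mul_ne_zero hρ h₁) (mul_ne_zero hρ h₂),
    div_eq_div_iff (by positivity) (by positivity)]
  linear_combination (Θ * ρ ^ 2 * (1 + ξ₁ * Θ) * (1 + ξ₂ * Θ)) * hroot

theorem N_lt_N_of_lt_root (hρ : 0 < ρ) (hξ₁ : 0 ≤ ξ₁) (hξ₂ : 0 ≤ ξ₂)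
    (hslope : 0 < η₁ * ξ₂ - η₂ * ξ₁) (hroot : η₁ - η₂ + (η₁ * ξ₂ - η₂ * ξ₁) * Θc = 0)
    (hΘ : 0 < Θ) (h : Θ < Θc) :
    N ρ η₁ ξ₁ Θ < N ρ η₂ ξ₂ Θ := by
  rw [← sub_neg, N_sub_N hρ.ne' (by positivity) (by positivity) hroot]
  exact div_neg_of_neg_of_pos (mul_neg_of_pos_of_neg (by positivity) (sub_neg.2 h))
    (by positivity)

theorem N_lt_N_of_root_lt (hρ : 0 < ρ) (hξ₁ : 0 ≤ ξ₁) (hξ₂ : 0 ≤ ξ₂)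
    (hslope : 0 < η₁ * ξ₂ - η₂ * ξ₁) (hroot : η₁ - η₂ + (η₁ * ξ₂ - η₂ * ξ₁) * Θc = 0)
    (hΘc : 0 ≤ Θc) (h : Θc < Θ) :
    N ρ η₂ ξ₂ Θ < N ρ η₁ ξ₁ Θ := by
  have hΘ : 0 < Θ := hΘc.trans_lt h
  rw [← sub_pos, N_sub_N hρ.ne' (by positivity) (by positivity) hroot]
  exact div_pos (mul_pos (by positivity) (sub_pos.2 h)) (by positivity)

end Crossing

section Model

variable (asa aas aal alc als acs bls bcs : ℝ)

noncomputable def η₁ : ℝ := 1 / ((asa / (aas + aal)) * (1 + aal / als))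

noncomputable def ξ₁ : ℝ := (aal * bls / (als * (aas + aal))) * η₁ asa aas aal als

noncomputable def D : ℝ := 1 + aal / (als + alc) + aal * alc / ((als + alc) * acs)

noncomputable def η₂ : ℝ := (aas + aal) / (asa * D aal alc als acs)

noncomputable def ξ₂ : ℝ :=
  (bls * aal / (alc + als) + bcs * aal * alc / (acs * (alc + als))) / (asa * D aal alc als acs)

noncomputable def Θc : ℝ := asa * (1 - acs / als) / (bls * (acs / als - bcs / bls))

noncomputable def scale : ℝ :=
  (aas + aal) * aal * alc / (asa ^ 2 * (als + aal) * (acs * (als + alc + aal) + aal * alc))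

variable {asa aas aal alc als acs bls bcs}

theorem η₁_sub_η₂
    (hasa : 0 < asa) (haas : 0 < aas) (haal : 0 < aal) (halc : 0 < alc) (hals : 0 < als)
    (hacs : 0 < acs) :
    η₁ asa aas aal als - η₂ asa aas aal alc als acs =
      scale asa aas aal alc als acs * (asa * (als - acs)) := by
  unfold η₁ η₂ D scale
  field_simp
  ring

theorem η₁_mul_ξ₂_sub
    (hasa : 0 < asa) (haas : 0 < aas) (haal : 0 < aal) (halc : 0 < alc) (hals : 0 < als)
    (hacs : 0 < acs) :
    η₁ asa aas aal als * ξ₂ asa aal alc als acs bls bcs -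
        η₂ asa aas aal alc als acs * ξ₁ asa aas aal als bls =
      scale asa aas aal alc als acs * (als * bcs - acs * bls) := by
  unfold ξ₁ ξ₂ η₁ η₂ D scale
  field_simp
  ring

theorem scale_pos
    (hasa : 0 < asa) (haas : 0 < aas) (haal : 0 < aal) (halc : 0 < alc) (hals : 0 < als)
    (hacs : 0 < acs) : 0 < scale asa aas aal alc als acs := by
  unfold scale; positivity

theorem ξ₁_pos (hasa : 0 < asa) (haas : 0 < aas) (haal : 0 < aal) (hals : 0 < als)
    (hbls : 0 < bls) : 0 < ξ₁ asa aas aal als bls := by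
  unfold ξ₁ η₁; positivity

theorem ξ₂_pos (hasa : 0 < asa) (haal : 0 < aal) (halc : 0 < alc) (hals : 0 < als)
    (hacs : 0 < acs) (hbls : 0 < bls) (hbcs : 0 < bcs) : 0 < ξ₂ asa aal alc als acs bls bcs := by
  unfold ξ₂ D; positivity

theorem Θc_pos (hasa : 0 < asa) (hbls : 0 < bls) (hcond1 : 1 < acs / als)
    (hcond2 : acs / als < bcs / bls) : 0 < Θc asa als acs bls bcs :=
  div_pos_of_neg_of_neg (mul_neg_of_pos_of_neg hasa (sub_neg.2 hcond1))
    (mul_neg_of_pos_of_neg hbls (sub_neg.2 hcond2))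

theorem mul_sub_mul_pos (hals : 0 < als) (hbls : 0 < bls)
    (hcond2 : acs / als < bcs / bls) :
    0 < als * bcs - acs * bls := by
  rw [div_lt_div_iff₀ hals hbls] at hcond2
  linarith

theorem Θc_eq (hals : 0 < als) (hbls : 0 < bls) (hcond2 : acs / als < bcs / bls) :
    Θc asa als acs bls bcs = asa * (acs - als) / (als * bcs - acs * bls) := by
  rw [Θc, div_eq_div_iff (mul_ne_zero hbls.ne' (sub_neg.2 hcond2).ne)
    (mul_sub_mul_pos hals hbls hcond2).ne']
  field_simp
  ring

theorem η₁_mul_ξ₂_sub_pos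
    (hasa : 0 < asa) (haas : 0 < aas) (haal : 0 < aal) (halc : 0 < alc) (hals : 0 < als)
    (hacs : 0 < acs) (hbls : 0 < bls) (hcond2 : acs / als < bcs / bls) :
    0 < η₁ asa aas aal als * ξ₂ asa aal alc als acs bls bcs -
      η₂ asa aas aal alc als acs * ξ₁ asa aas aal als bls := by
  rw [η₁_mul_ξ₂_sub hasa haas haal halc hals hacs]
  exact mul_pos (scale_pos hasa haas haal halc hals hacs) (mul_sub_mul_pos hals hbls hcond2)

theorem η₁_sub_η₂_add_mul_Θc_eq_zero
    (hasa : 0 < asa) (haas : 0 < aas) (haal : 0 < aal) (halc : 0 < alc) (hals : 0 < als)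
    (hacs : 0 < acs) (hbls : 0 < bls) (hcond2 : acs / als < bcs / bls) :
    η₁ asa aas aal als - η₂ asa aas aal alc als acs +
      (η₁ asa aas aal als * ξ₂ asa aal alc als acs bls bcs -
        η₂ asa aas aal alc als acs * ξ₁ asa aas aal als bls) * Θc asa als acs bls bcs = 0 := by
  rw [η₁_sub_η₂ hasa haas haal halc hals hacs, η₁_mul_ξ₂_sub hasa haas haal halc hals hacs,
    Θc_eq hals hbls hcond2, mul_assoc, mul_div_cancel₀ _ (mul_sub_mul_pos hals hbls hcond2).ne']
  ring

end Model
end Switch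

theorem stmt16_switch_c_general
    (asa aas aal alc als acs bls bcs ρ : ℝ)
    (hasa : 0 < asa) (haas : 0 < aas) (haal : 0 < aal) (halc : 0 < alc)
    (hals : 0 < als) (hacs : 0 < acs) (hbls : 0 < bls) (hbcs : 0 < bcs)
    (hρ : 0 < ρ)
    (hcond1 : 1 < acs / als) (hcond2 : acs / als < bcs / bls) :
    let η₁ := 1 / ((asa / (aas + aal)) * (1 + aal / als))
    let ξ₁ := (aal * bls / (als * (aas + aal))) * (1 / ((asa / (aas + aal)) * (1 + aal / als)))
    let D := 1 + aal / (als + alc) + aal * alc / ((als + alc) * acs)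
    let η₂ := (aas + aal) / (asa * D)
    let ξ₂ := (bls * aal / (alc + als) + bcs * aal * alc / (acs * (alc + als))) / (asa * D)
    let N₁ := fun Θ : ℝ => Θ / ρ + Θ * η₁ / (ρ * (1 + ξ₁ * Θ))
    let N₂ := fun Θ : ℝ => Θ / ρ + Θ * η₂ / (ρ * (1 + ξ₂ * Θ))
    0 < asa * (1 - acs / als) / (bls * (acs / als - bcs / bls)) ∧
    (∀ Θ : ℝ, 0 < Θ → Θ < asa * (1 - acs / als) / (bls * (acs / als - bcs / bls)) → N₁ Θ < N₂ Θ) ∧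
    (∀ Θ : ℝ, asa * (1 - acs / als) / (bls * (acs / als - bcs / bls)) < Θ → N₂ Θ < N₁ Θ) := by
  intro η₁ ξ₁ D η₂ ξ₂ N₁ N₂
  have hΘc := Switch.Θc_pos hasa hbls hcond1 hcond2
  have hξ₁ := Switch.ξ₁_pos hasa haas haal hals hbls
  have hξ₂ := Switch.ξ₂_pos hasa haal halc hals hacs hbls hbcs
  have hslope := Switch.η₁_mul_ξ₂_sub_pos hasa haas haal halc hals hacs hbls hcond2
  have hroot := Switch.η₁_sub_η₂_add_mul_Θc_eq_zero hasa haas haal halc hals hacs hbls hcond2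
  exact ⟨hΘc, fun Θ hΘ h => Switch.N_lt_N_of_lt_root hρ hξ₁.le hξ₂.le hslope hroot hΘ h,
    fun Θ h => Switch.N_lt_N_of_root_lt hρ hξ₁.le hξ₂.le hslope hroot hΘc.le h⟩

theorem stmt16_switch_c
    (asa aas aal alc als acs bls bcs ρ : ℝ)
    (hasa : 0 < asa) (haas : 0 < aas) (haal : 0 < aal) (halc : 0 < alc)
    (hals : 0 < als) (hacs : 0 < acs) (hbls : 0 < bls) (hbcs : 0 < bcs)
    (hρ : 0 < ρ) (hρ1 : ρ < 1)
    (hcond1 : 1 < acs / als) (hcond2 : acs / als < bcs / bls) :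
    let η₁ := 1 / ((asa / (aas + aal)) * (1 + aal / als))
    let ξ₁ := (aal * bls / (als * (aas + aal))) * (1 / ((asa / (aas + aal)) * (1 + aal / als)))
    let D := 1 + aal / (als + alc) + aal * alc / ((als + alc) * acs)
    let η₂ := (aas + aal) / (asa * D)
    let ξ₂ := (bls * aal / (alc + als) + bcs * aal * alc / (acs * (alc + als))) / (asa * D)
    let N₁ := fun Θ : ℝ => Θ / ρ + Θ * η₁ / (ρ * (1 + ξ₁ * Θ))
    let N₂ := fun Θ : ℝ => Θ / ρ + Θ * η₂ / (ρ * (1 + ξ₂ * Θ))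
    0 < asa * (1 - acs / als) / (bls * (acs / als - bcs / bls)) ∧
    (∀ Θ : ℝ, 0 < Θ → Θ < asa * (1 - acs / als) / (bls * (acs / als - bcs / bls)) → N₁ Θ < N₂ Θ) ∧
    (∀ Θ : ℝ, asa * (1 - acs / als) / (bls * (acs / als - bcs / bls)) < Θ → N₂ Θ < N₁ Θ) :=
  stmt16_switch_c_general asa aas aal alc als acs bls bcs ρ hasa haas haal halc hals hacs hbls hbcs
    hρ hcond1 hcond2
end
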